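/- For every n ≥ 1, the thinness of the n-dimensional hypercube Q_n is at least n − 2. -/

import Mathlib

open SimpleGraph

/-- An ordering (given by an injective rank function `f`) and a partition (given by a
coloring `c`) are consistent: for `r < s < t`, if `r, s` are in the same class and
`t` is adjacent to `r`, then `t` is adjacent to `s`. -/
def Consistent {V : Type*} (G : SimpleGraph V) (f : V → ℕ) (c : V → ℕ) : Prop :=
  ∀ r s t : V, f r < f s → f s < f t → c r = c s → G.Adj t r → G.Adj t s

/-- Strong consistency: consistency with the ordering and with its reverse. -/
def StronglyConsistent {V : Type*} (G : SimpleGraph V) (f : V → ℕ) (c : V → ℕ) : Prop :=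
  Consistent G f c ∧
    ∀ r s t : V, f r < f s → f s < f t → c s = c t → G.Adj t r → G.Adj s r

/-- The thinness of a graph. -/
noncomputable def thin {V : Type*} (G : SimpleGraph V) : ℕ :=
  sInf {k | ∃ f c : V → ℕ, Function.Injective f ∧ (∀ v, c v < k) ∧ Consistent G f c}

/-- The proper thinness of a graph. -/
noncomputable def pthin {V : Type*} (G : SimpleGraph V) : ℕ :=
  sInf {k | ∃ f c : V → ℕ, Function.Injective f ∧ (∀ v, c v < k) ∧ StronglyConsistent G f c}

/-- Independent thinness: classes must be independent sets. -/
noncomputable def indthin {V : Type*} (G : SimpleGraph V) : ℕ :=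
  sInf {k | ∃ f c : V → ℕ, Function.Injective f ∧ (∀ v, c v < k) ∧ Consistent G f c ∧
    ∀ u v : V, c u = c v → ¬ G.Adj u v}

/-- Independent proper thinness. -/
noncomputable def indpthin {V : Type*} (G : SimpleGraph V) : ℕ :=
  sInf {k | ∃ f c : V → ℕ, Function.Injective f ∧ (∀ v, c v < k) ∧ StronglyConsistent G f c ∧
    ∀ u v : V, c u = c v → ¬ G.Adj u v}

/-- Complete thinness: classes must be cliques. -/
noncomputable def compthin {V : Type*} (G : SimpleGraph V) : ℕ :=
  sInf {k | ∃ f c : V → ℕ, Function.Injective f ∧ (∀ v, c v < k) ∧ Consistent G f c ∧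
    ∀ u v : V, u ≠ v → c u = c v → G.Adj u v}

/-- Complete proper thinness. -/
noncomputable def comppthin {V : Type*} (G : SimpleGraph V) : ℕ :=
  sInf {k | ∃ f c : V → ℕ, Function.Injective f ∧ (∀ v, c v < k) ∧ StronglyConsistent G f c ∧
    ∀ u v : V, u ≠ v → c u = c v → G.Adj u v}

/-- The incompatibility graph `G_<` of a graph and an ordering: for `v < w`,
`vw` is an edge iff there is `z > w` adjacent to `v` but not to `w`. -/
def incompat {V : Type*} (G : SimpleGraph V) (f : V → ℕ) : SimpleGraph V where
  Adj v w :=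
    (f v < f w ∧ ∃ z, f w < f z ∧ G.Adj z v ∧ ¬ G.Adj z w) ∨
    (f w < f v ∧ ∃ z, f v < f z ∧ G.Adj z w ∧ ¬ G.Adj z v)
  symm := ⟨fun v w h => h.symm⟩
  loopless := ⟨fun v h => by rcases h with ⟨h, _⟩ | ⟨h, _⟩ <;> exact lt_irrefl _ h⟩

/-- The join of two graphs. -/
def joinG {V₁ V₂ : Type*} (G₁ : SimpleGraph V₁) (G₂ : SimpleGraph V₂) :
    SimpleGraph (V₁ ⊕ V₂) where
  Adj x y := match x, y with
    | Sum.inl u, Sum.inl v => G₁.Adj u v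
    | Sum.inr u, Sum.inr v => G₂.Adj u v
    | Sum.inl _, Sum.inr _ => True
    | Sum.inr _, Sum.inl _ => True
  symm := by constructor
             rintro (u | u) (v | v) h
             · exact G₁.symm.symm _ _ h
             · trivial
             · trivial
             · exact G₂.symm.symm _ _ h
  loopless := by constructor
                 rintro (u | u) h
                 · exact G₁.loopless.irrefl u h
                 · exact G₂.loopless.irrefl u h

/-- A graph is complete iff all pairs of distinct vertices are adjacent. -/
def IsCompleteGraph {V : Type*} (G : SimpleGraph V) : Prop :=
  ∀ u v : V, u ≠ v → G.Adj u v

/-- The clique number of a graph. -/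
noncomputable def omegaNum {V : Type*} (G : SimpleGraph V) : ℕ :=
  sSup {n | ∃ s : Finset V, s.card = n ∧ ∀ u ∈ s, ∀ v ∈ s, u ≠ v → G.Adj u v}

/-- The independence number of a graph. -/
noncomputable def alphaNum {V : Type*} (G : SimpleGraph V) : ℕ :=
  sSup {n | ∃ s : Finset V, s.card = n ∧ ∀ u ∈ s, ∀ v ∈ s, u ≠ v → ¬ G.Adj u v}


/-- The `n`-dimensional hypercube: binary strings of length `n`, adjacent iff
they differ in exactly one position. -/
def hypercube (n : ℕ) : SimpleGraph (Fin n → Bool) where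
  Adj u v := ∃ i, u i ≠ v i ∧ ∀ j, u j ≠ v j → j = i
  symm := ⟨fun u v ⟨i, hi, h⟩ => ⟨i, hi.symm, fun j hj => h j hj.symm⟩⟩
  loopless := ⟨fun u ⟨i, hi, _⟩ => hi rfl⟩

/-!
If two vertices `x`, `y` of one class appear in this order, every neighbour of `x` coming after
`y` is a common neighbour of `x` and `y`, so all but two of the `n` neighbours of `x` precede `y`.
Hence the vertex `y` that first repeats a class has at least `n - 2` predecessors, which all lie in
distinct classes.
-/

open Finset SimpleGraph

section Thinness

variable {V : Type*} {G : SimpleGraph V}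

theorem le_thin_of_forall_consistent [Finite V] {N : ℕ}
    (h : ∀ (f c : V → ℕ) (k : ℕ), Function.Injective f → (∀ v, c v < k) → Consistent G f c →
      N ≤ k) :
    N ≤ thin G := by
  obtain ⟨m, ⟨e⟩⟩ := Finite.exists_equiv_fin V
  refine le_csInf ⟨m, fun v => e v, fun v => e v, Fin.val_injective.comp e.injective,
    fun v => (e v).isLt, ?_⟩ ?_
  · intro r s t _ _ hrs hadj
    rwa [← e.injective (Fin.val_injective hrs)]
  · rintro k ⟨f, c, hf, hc, hcons⟩
    exact h f c k hf hc hcons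

variable [Fintype V] [DecidableEq V] [DecidableRel G.Adj] {f c : V → ℕ}

theorem Consistent.degree_le (hcons : Consistent G f c) (hf : Function.Injective f) {x y : V}
    (hc : c x = c y) (hxy : f x < f y) :
    G.degree x ≤ #{u | f u < f y} + #(G.neighborFinset x ∩ G.neighborFinset y) := by
  set P : Finset V := {u | f u < f y}
  have hsub : G.neighborFinset x ⊆
      (insert y P).erase x ∪ (G.neighborFinset x ∩ G.neighborFinset y) := by
    intro t ht
    rw [mem_neighborFinset] at ht
    rcases lt_trichotomy (f t) (f y) with h | h | h
    · simp [P, h, ht.ne']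
    · simp [← hf h, ht.ne']
    · simp [ht, (hcons x y t hxy h hc ht.symm).symm]
  calc G.degree x = #(G.neighborFinset x) := rfl
    _ ≤ #((insert y P).erase x) + #(G.neighborFinset x ∩ G.neighborFinset y) :=
      (card_le_card hsub).trans (card_union_le _ _)
    _ = #P + #(G.neighborFinset x ∩ G.neighborFinset y) := by
      rw [card_erase_of_mem (by simp [P, hxy]), card_insert_of_notMem (by simp [P]),
        Nat.add_sub_cancel]

theorem Consistent.sub_le_of_le_degree [Nonempty V] (hcons : Consistent G f c)
    (hf : Function.Injective f) {k d m : ℕ} (hc : ∀ v, c v < k) (hdeg : ∀ v, d ≤ G.degree v)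
    (hcommon : ∀ x y, x ≠ y → #(G.neighborFinset x ∩ G.neighborFinset y) ≤ m) :
    d - m ≤ k := by
  have card_le_of_injOn (s : Finset V) (hs : Set.InjOn c s) : #s ≤ k :=
    (card_le_card_of_injOn c (fun v _ => mem_range.2 (hc v)) hs).trans_eq (card_range k)
  by_cases hrep : ∃ y x, c x = c y ∧ f x < f y
  · obtain ⟨y, hy, hmin⟩ := exists_min_image ({y | ∃ x, c x = c y ∧ f x < f y} : Finset V) f
      (hrep.imp fun _ hy => by simpa using hy)
    obtain ⟨x, hcxy, hxy⟩ := (mem_filter.1 hy).2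
    have hinj : Set.InjOn c ({u | f u < f y} : Finset V) := by
      intro u hu u' hu' hcu
      simp only [coe_filter, mem_univ, true_and, Set.mem_ofPred_eq] at hu hu'
      by_contra hne
      rcases (hf.ne hne).lt_or_gt with h | h
      · exact (hmin u' (by simpa using ⟨u, hcu, h⟩)).not_gt hu'
      · exact (hmin u (by simpa using ⟨u', hcu.symm, h⟩)).not_gt hu
    have hdx := (hdeg x).trans (hcons.degree_le hf hcxy hxy)
    have hxy_common := hcommon x y (hf.ne_iff.1 hxy.ne)
    have hprefix := card_le_of_injOn _ hinj
    omega
  · have hinj : Set.InjOn c (univ : Finset V) := fun u _ u' _ hcu => by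
      by_contra hne
      rcases (hf.ne hne).lt_or_gt with h | h
      · exact hrep ⟨u', u, hcu, h⟩
      · exact hrep ⟨u, u', hcu.symm, h⟩
    obtain ⟨v⟩ := ‹Nonempty V›
    have hdv := (hdeg v).trans (G.degree_lt_card_verts v).le
    have hV := card_le_of_injOn _ hinj
    rw [card_univ] at hV
    omega

theorem sub_le_thin_of_le_degree [Nonempty V] {d m : ℕ} (hdeg : ∀ v, d ≤ G.degree v)
    (hcommon : ∀ x y, x ≠ y → #(G.neighborFinset x ∩ G.neighborFinset y) ≤ m) :
    d - m ≤ thin G :=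
  le_thin_of_forall_consistent fun _ _ _ hf hc hcons =>
    hcons.sub_le_of_le_degree hf hc hdeg hcommon

end Thinness

section Hypercube

variable {n : ℕ}

theorem hypercube_adj_iff_hammingDist {u v : Fin n → Bool} :
    (hypercube n).Adj u v ↔ hammingDist u v = 1 := by
  simp [hypercube, hammingDist, card_eq_one, eq_singleton_iff_unique_mem]

instance : DecidableRel (hypercube n).Adj := fun _ _ =>
  decidable_of_iff _ hypercube_adj_iff_hammingDist.symm

theorem hypercube_adj_iff {v w : Fin n → Bool} :
    (hypercube n).Adj v w ↔ ∃ i, w = Function.update v i (!v i) := by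
  constructor
  · rintro ⟨i, hi, hunique⟩
    refine ⟨i, funext fun j => ?_⟩
    by_cases hj : j = i
    · subst hj
      simpa [eq_comm, Bool.eq_not_iff] using hi
    · rw [Function.update_of_ne hj]
      exact (not_imp_comm.1 (hunique j) hj).symm
  · rintro ⟨i, rfl⟩
    refine ⟨i, by simp, fun j hj => ?_⟩
    by_contra hne
    simp [Function.update_of_ne hne] at hj

theorem hypercube_neighborFinset (v : Fin n → Bool) :
    (hypercube n).neighborFinset v = univ.image fun i => Function.update v i (!v i) := by
  ext w
  simp [hypercube_adj_iff, eq_comm]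

theorem hypercube_degree (v : Fin n → Bool) : (hypercube n).degree v = n := by
  rw [← card_neighborFinset_eq_degree, hypercube_neighborFinset, card_image_of_injective,
    card_univ, Fintype.card_fin]
  intro i j hij
  by_contra hne
  simpa [Function.update_of_ne hne] using congrFun hij i

theorem hypercube_card_common_le {x y : Fin n → Bool} (hxy : x ≠ y) :
    #((hypercube n).neighborFinset x ∩ (hypercube n).neighborFinset y) ≤ 2 := by
  obtain hempty | ⟨t₀, ht₀⟩ :=
    ((hypercube n).neighborFinset x ∩ (hypercube n).neighborFinset y).eq_empty_or_nonempty
  · simp [hempty]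
  have hsub : (hypercube n).neighborFinset x ∩ (hypercube n).neighborFinset y ⊆
      ({i | x i ≠ y i} : Finset (Fin n)).image fun i => Function.update x i (!x i) := by
    intro t ht
    simp only [mem_inter, mem_neighborFinset] at ht
    obtain ⟨i, rfl⟩ := hypercube_adj_iff.1 ht.1
    obtain ⟨j, -, hj⟩ := ht.2
    -- flipping a coordinate where `x` and `y` agree would make `t` differ from `y` twice
    refine mem_image.2 ⟨i, mem_filter.2 ⟨mem_univ _, fun hxyi => hxy ?_⟩, rfl⟩
    have hij : i = j := hj i (by simp [hxyi])
    funext k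
    by_contra hk
    have hki : k ≠ i := by rintro rfl; exact hk hxyi
    exact hki ((hj k (by simpa [Function.update_of_ne hki, eq_comm] using hk)).trans hij.symm)
  simp only [mem_inter, mem_neighborFinset, hypercube_adj_iff_hammingDist] at ht₀
  calc _ ≤ hammingDist x y := (card_le_card hsub).trans card_image_le
    _ ≤ hammingDist x t₀ + hammingDist t₀ y := hammingDist_triangle x t₀ y
    _ = 2 := by rw [ht₀.1, hammingDist_comm, ht₀.2]

end Hypercube

theorem thin_hypercube_general (n : ℕ) : n - 2 ≤ thin (hypercube n) :=
  sub_le_thin_of_le_degree (fun v => (hypercube_degree v).ge) fun _ _ => hypercube_card_common_le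

/-- For every `n ≥ 1`, the thinness of the `n`-dimensional hypercube is at least `n - 2`. -/
theorem thin_hypercube (n : ℕ) (hn : 1 ≤ n) : n - 2 ≤ thin (hypercube n) :=
  thin_hypercube_general n
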